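/- arXiv:2304.11826 — 4 statements merged into one kernel-verified Lean document; each statement's English description precedes it below -/
import Mathlib

section
/- For any two planted phylogenetic trees T and S and any map σ: L(T) → L(S), there exists an HGT-free σ-reconciliation (T,S,μ,σ). In particular, the map μ₀ defined by μ₀(0_T) = 0_S, μ₀(x) = σ(x) for all leaves x ∈ L(T), and μ₀(x) = the edge 0_S ρ_S of S for all inner vertices x ∈ V⁰(T), yields an HGT-free σ-reconciliation (T,S,μ₀,σ). -/
/-- A planted phylogenetic rooted tree, encoded by a parent function on a
finite vertex set.  The root `0_T` is a fixed point of `parent`; every vertex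
reaches the root by iterating `parent`; the root has exactly one child
(`planted`); and every inner vertex (non-root vertex having a child) has at
least two children (`phylo`). -/
structure PPTree where
  V : Type
  [fintypeV : Fintype V]
  [decEqV : DecidableEq V]
  root : V
  parent : V → V
  parent_root : parent root = root
  reach : ∀ v : V, ∃ n : ℕ, parent^[n] v = root
  planted : ∃! v : V, v ≠ root ∧ parent v = root
  phylo : ∀ v : V, v ≠ root → (∃ u, parent u = v ∧ u ≠ v) →
      ∃ u w, parent u = v ∧ parent w = v ∧ u ≠ w ∧ u ≠ v ∧ w ≠ v

attribute [instance] PPTree.fintypeV PPTree.decEqV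

namespace PPTree

variable (T : PPTree)

/-- `T.le x y` means `x ⪯_T y`, i.e. `y` is an ancestor of `x` (or `x = y`). -/
def le (x y : T.V) : Prop := ∃ n : ℕ, T.parent^[n] x = y

/-- `T.lt x y` means `x ≺_T y`. -/
def lt (x y : T.V) : Prop := T.le x y ∧ x ≠ y

/-- Leaves are the `⪯_T`-minimal vertices, i.e. vertices without children. -/
def isLeaf (v : T.V) : Prop := ∀ u, T.parent u = v → u = v

/-- Inner vertices: neither leaves nor the planted root. -/
def inner (v : T.V) : Prop := v ≠ T.root ∧ ¬ T.isLeaf v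

/-- The last common ancestor of two vertices: the `⪯_T`-minimal common
ancestor. -/
noncomputable def lca (x y : T.V) : T.V :=
  @Classical.epsilon _ ⟨T.root⟩
    fun v => T.le x v ∧ T.le y v ∧ ∀ w, T.le x w → T.le y w → T.le v w

/-- The last common ancestor of a set of vertices. -/
noncomputable def lcaSet (A : Set T.V) : T.V :=
  @Classical.epsilon _ ⟨T.root⟩
    fun v => (∀ a ∈ A, T.le a v) ∧ ∀ w, (∀ a ∈ A, T.le a w) → T.le v w

/-- `ρ_T`, the unique child of the planted root. -/
noncomputable def rho : T.V := T.planted.choose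

theorem rho_ne_root : T.rho ≠ T.root := T.planted.choose_spec.1.1

/-- Edges of `T`, identified with their child endpoint: the vertex `v ≠ 0_T`
represents the edge `(parent v, v)`. -/
abbrev Edge := {v : T.V // v ≠ T.root}

/-- The union `V(T) ∪ E(T)`. -/
abbrev VE := T.V ⊕ T.Edge

/-- The ancestor order `⪯_T` extended to `V(T) ∪ E(T)`: for an edge `e = uv`
(`u` the parent of `v`), `x ⪯ e` iff `x ⪯ v`, `e ⪯ x` iff `u ⪯ x`, and
`e ⪯ f` iff the child endpoints are comparable accordingly. -/
def leVE : T.VE → T.VE → Prop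
  | Sum.inl x, Sum.inl y => T.le x y
  | Sum.inl x, Sum.inr e => T.le x e.1
  | Sum.inr e, Sum.inl y => T.le (T.parent e.1) y
  | Sum.inr e, Sum.inr f => T.le e.1 f.1

def ltVE (a b : T.VE) : Prop := T.leVE a b ∧ a ≠ b

/-- Two elements of `V(T) ∪ E(T)` are comparable. -/
def cmpVE (a b : T.VE) : Prop := T.leVE a b ∨ T.leVE b a

/-- Membership in `L(T)` for elements of `V(T) ∪ E(T)`. -/
def isLeafVE : T.VE → Prop
  | Sum.inl v => T.isLeaf v
  | Sum.inr _ => False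

/-- Map an element of `V(T) ∪ E(T)` to a vertex (an edge `uv` is sent to its
child endpoint `v`). -/
def toVertex : T.VE → T.V
  | Sum.inl v => v
  | Sum.inr e => e.1

end PPTree

/-- Axioms (R0)–(R3) of a reconciliation map `μ : V(T) → V(S) ∪ E(S)`. -/
structure IsRecon (T S : PPTree) (μ : T.V → S.VE) : Prop where
  R0 : ∀ x, μ x = Sum.inl S.root ↔ x = T.root
  R1 : ∀ x, S.isLeafVE (μ x) ↔ T.isLeaf x
  R2 : ∀ x y, T.lt y x → (∃ u, μ x = Sum.inl u) → (∃ v, μ y = Sum.inl v) → μ x ≠ μ y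
  R3 : ∀ x y, T.lt y x → ¬ S.ltVE (μ x) (μ y)

/-- A reconciliation is HGT-free if the images of the endpoints of every edge
of `T` are `⪯_S`-comparable. -/
def IsHGTFree (T S : PPTree) (μ : T.V → S.VE) : Prop :=
  ∀ v : T.V, v ≠ T.root → S.cmpVE (μ (T.parent v)) (μ v)

/-- `(T,S,μ,σ)` is a σ-reconciliation when `μ` restricted to `L(T)` equals
`σ`. -/
def SigmaCompat (T S : PPTree) (μ : T.V → S.VE) (σ : T.V → S.V) : Prop :=
  ∀ x, T.isLeaf x → μ x = Sum.inl (σ x)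

/-- A time map for `T`. -/
def IsTimeMap (T : PPTree) (τ : T.V → ℝ) : Prop :=
  ∀ x y, T.lt x y → τ x < τ y

/-- Axioms (S0)–(S3) of a relaxed scenario `(T,S,μ,τ_T,τ_S)`. -/
structure IsRelaxedScenario (T S : PPTree) (μ : T.V → S.VE)
    (τT : T.V → ℝ) (τS : S.V → ℝ) : Prop where
  timeT : IsTimeMap T τT
  timeS : IsTimeMap S τS
  S0 : ∀ x, μ x = Sum.inl S.root ↔ x = T.root
  S1 : ∀ x, S.isLeafVE (μ x) ↔ T.isLeaf x
  S2 : ∀ x v, μ x = Sum.inl v → τS v = τT x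
  S3 : ∀ x (e : S.Edge), μ x = Sum.inr e → τS e.1 < τT x ∧ τT x < τS (S.parent e.1)

open Classical in
/-- The map `μ₀`: the planted root of `T` is sent to the planted root of `S`,
leaves are sent to leaves according to `σ`, and all inner vertices are sent to
the edge `0_S ρ_S` of `S`. -/
noncomputable def mu0 (T S : PPTree) (σ : T.V → S.V) : T.V → S.VE := fun x =>
  if x = T.root then Sum.inl S.root
  else if T.isLeaf x then Sum.inl (σ x)
  else Sum.inr ⟨S.rho, S.rho_ne_root⟩

/-! `μ₀` sends every inner vertex to the edge `0_S ρ_S`, which lies above every element of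
`S` except the root `0_S`, and only `0_S` lies above it. As `μ₀` sends only `0_T` to `0_S`,
the endpoints of an edge of `T` always have comparable images, and no vertex is mapped strictly
above the image of one of its ancestors. -/

namespace PPTree

variable (T : PPTree) {v w x y : T.V}

theorem le_root (v : T.V) : T.le v T.root := T.reach v

theorem eq_root_of_root_le (h : T.le T.root v) : v = T.root := by
  obtain ⟨n, rfl⟩ := h
  exact Function.iterate_fixed T.parent_root n

theorem eq_root_of_parent_eq_self (h : T.parent v = v) : v = T.root := by
  obtain ⟨n, hn⟩ := T.reach v
  rwa [Function.iterate_fixed h n] at hn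

theorem parent_rho : T.parent T.rho = T.root := T.planted.choose_spec.1.2

theorem le_rho (hv : v ≠ T.root) : T.le v T.rho := by
  obtain ⟨n, hn⟩ := T.reach v
  induction n generalizing v with
  | zero => exact absurd hn hv
  | succ n ih =>
    by_cases hp : T.parent v = T.root
    · exact ⟨0, T.planted.choose_spec.2 v ⟨hv, hp⟩⟩
    · obtain ⟨m, hm⟩ := ih hp hn
      exact ⟨m + 1, hm⟩

theorem eq_rho_or_eq_root_of_rho_le (h : T.le T.rho w) : w = T.rho ∨ w = T.root := by
  obtain ⟨_ | n, rfl⟩ := h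
  · exact Or.inl rfl
  · rw [Function.iterate_succ_apply, parent_rho]
    exact Or.inr (Function.iterate_fixed T.parent_root n)

theorem root_not_isLeaf : ¬ T.isLeaf T.root := fun h =>
  T.rho_ne_root (h _ T.parent_rho)

theorem ne_root_of_isLeaf (hv : T.isLeaf v) : v ≠ T.root := by
  rintro rfl
  exact T.root_not_isLeaf hv

theorem not_isLeaf_parent (hv : v ≠ T.root) : ¬ T.isLeaf (T.parent v) := fun h =>
  hv (T.eq_root_of_parent_eq_self (h v rfl).symm)

theorem eq_of_le_of_isLeaf (hx : T.isLeaf x) (h : T.le y x) : y = x := by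
  obtain ⟨n, hn⟩ := h
  induction n generalizing y with
  | zero => exact hn
  | succ n ih =>
    rw [Function.iterate_succ_apply'] at hn
    exact ih (hx _ hn)

theorem not_isLeaf_of_lt (h : T.lt y x) : ¬ T.isLeaf x := fun hx =>
  h.2 (T.eq_of_le_of_isLeaf hx h.1)

theorem ne_root_of_lt (h : T.lt y x) : y ≠ T.root := by
  rintro rfl
  exact h.2 (T.eq_root_of_root_le h.1).symm

theorem eq_root_or_isLeaf_or_inner (v : T.V) : v = T.root ∨ T.isLeaf v ∨ T.inner v := by
  by_cases h₁ : v = T.root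
  · exact Or.inl h₁
  by_cases h₂ : T.isLeaf v
  exacts [Or.inr (Or.inl h₂), Or.inr (Or.inr ⟨h₁, h₂⟩)]

noncomputable def rhoEdge : T.Edge := ⟨T.rho, T.rho_ne_root⟩

theorem leVE_inl_root (a : T.VE) : T.leVE a (Sum.inl T.root) := by
  rcases a with v | e
  exacts [T.le_root v, T.le_root _]

theorem eq_inl_root_of_inl_root_leVE {a : T.VE} (h : T.leVE (Sum.inl T.root) a) :
    a = Sum.inl T.root := by
  rcases a with v | e
  · exact congrArg Sum.inl (T.eq_root_of_root_le h)
  · exact absurd (T.eq_root_of_root_le h) e.2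

theorem leVE_rhoEdge {a : T.VE} (ha : a ≠ Sum.inl T.root) : T.leVE a (Sum.inr T.rhoEdge) := by
  rcases a with v | e
  · exact T.le_rho fun hv => ha (congrArg Sum.inl hv)
  · exact T.le_rho e.2

theorem eq_rhoEdge_or_eq_inl_root_of_rhoEdge_leVE {a : T.VE}
    (h : T.leVE (Sum.inr T.rhoEdge) a) : a = Sum.inr T.rhoEdge ∨ a = Sum.inl T.root := by
  rcases a with v | e
  · exact Or.inr (congrArg Sum.inl (T.eq_root_of_root_le (T.parent_rho ▸ h)))
  · rcases T.eq_rho_or_eq_root_of_rho_le h with he | he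
    · exact Or.inl (congrArg Sum.inr (Subtype.ext he))
    · exact absurd he e.2

end PPTree

section mu0

variable {T S : PPTree} {σ : T.V → S.V} {x y : T.V}

@[simp]
theorem mu0_root : mu0 T S σ T.root = Sum.inl S.root := by
  simp [mu0]

theorem mu0_of_isLeaf (hx : T.isLeaf x) : mu0 T S σ x = Sum.inl (σ x) := by
  simp [mu0, T.ne_root_of_isLeaf hx, hx]

theorem mu0_of_inner (hx : T.inner x) : mu0 T S σ x = Sum.inr S.rhoEdge := by
  simp [mu0, hx.1, hx.2, PPTree.rhoEdge]

theorem mu0_eq_inl_root_iff (hσ : ∀ x, T.isLeaf x → S.isLeaf (σ x)) :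
    mu0 T S σ x = Sum.inl S.root ↔ x = T.root := by
  rcases T.eq_root_or_isLeaf_or_inner x with rfl | hx | hx
  · simp
  · rw [mu0_of_isLeaf hx, Sum.inl.injEq]
    exact iff_of_false (S.ne_root_of_isLeaf (hσ x hx)) (T.ne_root_of_isLeaf hx)
  · rw [mu0_of_inner hx]
    exact iff_of_false Sum.inr_ne_inl hx.1

theorem mu0_isLeafVE_iff (hσ : ∀ x, T.isLeaf x → S.isLeaf (σ x)) :
    S.isLeafVE (mu0 T S σ x) ↔ T.isLeaf x := by
  rcases T.eq_root_or_isLeaf_or_inner x with rfl | hx | hx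
  · rw [mu0_root]
    exact iff_of_false S.root_not_isLeaf T.root_not_isLeaf
  · rw [mu0_of_isLeaf hx]
    exact iff_of_true (hσ x hx) hx
  · rw [mu0_of_inner hx]
    exact iff_of_false id hx.2

theorem mu0_ne_of_lt (hσ : ∀ x, T.isLeaf x → S.isLeaf (σ x)) (hlt : T.lt y x)
    (hx : ∃ u, mu0 T S σ x = Sum.inl u) : mu0 T S σ x ≠ mu0 T S σ y := by
  rcases T.eq_root_or_isLeaf_or_inner x with rfl | hxl | hxi
  · rw [mu0_root, ne_comm, Ne, mu0_eq_inl_root_iff hσ]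
    exact T.ne_root_of_lt hlt
  · exact absurd hxl (T.not_isLeaf_of_lt hlt)
  · obtain ⟨u, hu⟩ := hx
    exact absurd (mu0_of_inner hxi ▸ hu) Sum.inr_ne_inl

theorem mu0_not_ltVE (hσ : ∀ x, T.isLeaf x → S.isLeaf (σ x)) (hlt : T.lt y x) :
    ¬ S.ltVE (mu0 T S σ x) (mu0 T S σ y) := by
  rintro ⟨hle, hne⟩
  have hy : mu0 T S σ y ≠ Sum.inl S.root :=
    (mu0_eq_inl_root_iff hσ).not.mpr (T.ne_root_of_lt hlt)
  rcases T.eq_root_or_isLeaf_or_inner x with rfl | hxl | hxi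
  · rw [mu0_root] at hle
    exact hy (S.eq_inl_root_of_inl_root_leVE hle)
  · exact T.not_isLeaf_of_lt hlt hxl
  · rw [mu0_of_inner hxi] at hle hne
    rcases S.eq_rhoEdge_or_eq_inl_root_of_rhoEdge_leVE hle with h | h
    exacts [hne h.symm, hy h]

theorem mu0_isRecon (hσ : ∀ x, T.isLeaf x → S.isLeaf (σ x)) : IsRecon T S (mu0 T S σ) where
  R0 _ := mu0_eq_inl_root_iff hσ
  R1 _ := mu0_isLeafVE_iff hσ
  R2 _ _ hlt hx _ := mu0_ne_of_lt hσ hlt hx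
  R3 _ _ := mu0_not_ltVE hσ

theorem mu0_isHGTFree (hσ : ∀ x, T.isLeaf x → S.isLeaf (σ x)) : IsHGTFree T S (mu0 T S σ) := by
  intro v hv
  have hμv : mu0 T S σ v ≠ Sum.inl S.root := (mu0_eq_inl_root_iff hσ).not.mpr hv
  right
  by_cases hp : T.parent v = T.root
  · rw [hp, mu0_root]
    exact S.leVE_inl_root _
  · rw [mu0_of_inner ⟨hp, T.not_isLeaf_parent hv⟩]
    exact S.leVE_rhoEdge hμv

theorem mu0_sigmaCompat : SigmaCompat T S (mu0 T S σ) σ := fun _ => mu0_of_isLeaf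

end mu0

/-- For any two planted phylogenetic trees `T` and `S` and any
map `σ : L(T) → L(S)` there exists an HGT-free σ-reconciliation
`(T,S,μ,σ)`; in particular, `μ₀` yields an HGT-free σ-reconciliation. -/
theorem exists_HGTfree_sigma_reconciliation
    (T S : PPTree) (σ : T.V → S.V) (hσ : ∀ x, T.isLeaf x → S.isLeaf (σ x)) :
    (∃ μ : T.V → S.VE, IsRecon T S μ ∧ IsHGTFree T S μ ∧ SigmaCompat T S μ σ) ∧
    (IsRecon T S (mu0 T S σ) ∧ IsHGTFree T S (mu0 T S σ) ∧
      SigmaCompat T S (mu0 T S σ) σ) :=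
  have hμ₀ := ⟨mu0_isRecon hσ, mu0_isHGTFree hσ, mu0_sigmaCompat⟩
  ⟨⟨mu0 T S σ, hμ₀⟩, hμ₀⟩
end

section
/- Every HGT-free σ-reconciliation (T,S,μ,σ) satisfies lca_S(σ(L(T(x)))) ⪯_S μ(x) for every vertex x ∈ V(T), where T(x) denotes the subtree of T rooted at x and L(T(x)) its leaf set. -/
/-!
Along every edge `vp` of `T` (with `p` the parent of `v`) an HGT-free reconciliation satisfies
`μ(v) ⪯_S μ(p)`: the two images are comparable, and `μ(p) ≺_S μ(v)` is excluded by (R3).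
Hence `μ` is monotone along `⪯_T`, so every leaf `l ⪯_T x` gives `σ(l) = μ(l) ⪯_S μ(x)`, and
`μ(x)` (or the child endpoint of the edge `μ(x)`) is a common ancestor of `σ(L(T(x)))`,
hence lies above its last common ancestor.
-/

namespace PPTree

variable (T : PPTree)

lemma le_refl (x : T.V) : T.le x x := ⟨0, rfl⟩

variable {T}

lemma le_trans {x y z : T.V} (hxy : T.le x y) (hyz : T.le y z) : T.le x z := by
  obtain ⟨n, rfl⟩ := hxy
  obtain ⟨m, rfl⟩ := hyz
  exact ⟨m + n, Function.iterate_add_apply _ _ _ _⟩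

lemma le_parent_of_le {x v : T.V} (h : T.le x v) : T.le x (T.parent v) := by
  obtain ⟨n, rfl⟩ := h
  exact ⟨n + 1, Function.iterate_succ_apply' _ _ _⟩

lemma le_parent (x : T.V) : T.le x (T.parent x) := le_parent_of_le (T.le_refl x)

lemma parent_le_parent {u v : T.V} (h : T.le u v) : T.le (T.parent u) (T.parent v) := by
  obtain ⟨n, rfl⟩ := h
  exact ⟨n, Function.Commute.iterate_self _ _ _⟩

lemma iterate_parent_eq_root_of_le {x : T.V} {k j : ℕ} (hk : T.parent^[k] x = T.root)
    (hkj : k ≤ j) : T.parent^[j] x = T.root := by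
  rw [← Nat.sub_add_cancel hkj, Function.iterate_add_apply, hk,
    Function.iterate_fixed T.parent_root]

lemma eq_root_of_isPeriodicPt {x : T.V} {p : ℕ} (hx : Function.IsPeriodicPt T.parent p x)
    (hp : 0 < p) : x = T.root := by
  obtain ⟨k, hk⟩ := T.reach x
  rw [← (hx.mul_const k).eq]
  exact iterate_parent_eq_root_of_le hk (Nat.le_mul_of_pos_left k hp)

lemma le_antisymm {x y : T.V} (hxy : T.le x y) (hyx : T.le y x) : x = y := by
  obtain ⟨n, rfl⟩ := hxy
  obtain ⟨m, hm⟩ := hyx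
  have hper : Function.IsPeriodicPt T.parent (m + n) x := by
    rw [Function.IsPeriodicPt, Function.IsFixedPt, Function.iterate_add_apply, hm]
  rcases Nat.eq_zero_or_pos (m + n) with h | h
  · rw [show n = 0 by omega, Function.iterate_zero_apply]
  · rw [eq_root_of_isPeriodicPt hper h, Function.iterate_fixed T.parent_root]

lemma parent_ne_self {v : T.V} (hv : v ≠ T.root) : T.parent v ≠ v := fun h =>
  hv (eq_root_of_isPeriodicPt (Function.IsFixedPt.isPeriodicPt h 1) one_pos)

lemma lt_parent {v : T.V} (hv : v ≠ T.root) : T.lt v (T.parent v) :=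
  ⟨T.le_parent v, (parent_ne_self hv).symm⟩

variable (T)

abbrev toPartialOrder : PartialOrder T.V where
  le := T.le
  le_refl := T.le_refl
  le_trans _ _ _ := le_trans
  le_antisymm _ _ := le_antisymm

lemma exists_leaf_le (x : T.V) : ∃ l, T.isLeaf l ∧ T.le l x := by
  let _ : PartialOrder T.V := T.toPartialOrder
  obtain ⟨l, hlx, hmin⟩ := exists_minimal_le_of_wellFoundedLT (fun _ => True) x trivial
  refine ⟨l, fun u hu => ?_, hlx⟩
  exact le_antisymm ⟨1, hu⟩ (hmin.2 trivial ⟨1, hu⟩)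

lemma lcaSet_le {A : Set T.V} (hA : A.Nonempty) {w : T.V} (hw : ∀ a ∈ A, T.le a w) :
    T.le (T.lcaSet A) w := by
  classical
  obtain ⟨a, ha⟩ := hA
  have hP : ∃ n, ∀ b ∈ A, T.le b (T.parent^[n] a) := by
    obtain ⟨k, hk⟩ := T.reach a
    exact ⟨k, fun b _ => hk ▸ T.reach b⟩
  -- The lca of `A` is the lowest ancestor of `a` that lies above all of `A`.
  have hex : ∃ v, (∀ b ∈ A, T.le b v) ∧ ∀ w, (∀ b ∈ A, T.le b w) → T.le v w := by
    refine ⟨T.parent^[Nat.find hP] a, Nat.find_spec hP, fun w hw => ?_⟩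
    obtain ⟨m, rfl⟩ := hw a ha
    have hle : Nat.find hP ≤ m := Nat.find_min' hP hw
    exact ⟨m - Nat.find hP, by rw [← Function.iterate_add_apply, Nat.sub_add_cancel hle]⟩
  exact (Classical.epsilon_spec hex).2 w hw

lemma leVE_refl (a : T.VE) : T.leVE a a := by
  cases a with
  | inl v => exact T.le_refl v
  | inr e => exact T.le_refl e.1

variable {T}

lemma leVE_trans {a b c : T.VE} (hab : T.leVE a b) (hbc : T.leVE b c) : T.leVE a c := by
  match a, b, c with
  | .inl _, .inl _, .inl _ | .inl _, .inl _, .inr _ | .inl _, .inr _, .inr _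
  | .inr _, .inl _, .inl _ | .inr _, .inr _, .inr _ => exact le_trans hab hbc
  | .inl _, .inr _, .inl _ => exact le_trans (le_parent_of_le hab) hbc
  | .inr e, .inl _, .inr _ => exact le_trans (le_trans (T.le_parent e.1) hab) hbc
  | .inr _, .inr _, .inl _ => exact le_trans (parent_le_parent hab) hbc

lemma inl_leVE_iff {a : T.V} {b : T.VE} : T.leVE (.inl a) b ↔ T.le a (T.toVertex b) := by
  cases b <;> rfl

end PPTree

section Monotone

variable {T S : PPTree} {μ : T.V → S.VE}

lemma leVE_mu_parent (hR3 : ∀ x y, T.lt y x → ¬ S.ltVE (μ x) (μ y))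
    (hfree : IsHGTFree T S μ) {v : T.V} (hv : v ≠ T.root) :
    S.leVE (μ v) (μ (T.parent v)) := by
  rcases hfree v hv with hle | hle
  · have heq : μ (T.parent v) = μ v := by
      by_contra hne
      exact hR3 _ _ (PPTree.lt_parent hv) ⟨hle, hne⟩
    exact heq ▸ S.leVE_refl _
  · exact hle

lemma leVE_mu_of_le (hR3 : ∀ x y, T.lt y x → ¬ S.ltVE (μ x) (μ y))
    (hfree : IsHGTFree T S μ) {y x : T.V} (hyx : T.le y x) : S.leVE (μ y) (μ x) := by
  obtain ⟨n, rfl⟩ := hyx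
  induction n with
  | zero => exact S.leVE_refl _
  | succ n ih =>
    rw [Function.iterate_succ_apply']
    by_cases hroot : T.parent^[n] y = T.root
    · rwa [hroot, T.parent_root, ← hroot]
    · exact PPTree.leVE_trans ih (leVE_mu_parent hR3 hfree hroot)

end Monotone

/-- Every HGT-free σ-reconciliation `(T,S,μ,σ)` satisfies
`lca_S(σ(L(T(x)))) ⪯_S μ(x)` for every vertex `x ∈ V(T)`, where `L(T(x))` is
the set of leaves of the subtree of `T` rooted at `x`. -/
theorem lca_of_subtree_species_below_mu
    (T S : PPTree) (μ : T.V → S.VE) (σ : T.V → S.V)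
    (hrec : IsRecon T S μ) (hfree : IsHGTFree T S μ) (hσ : SigmaCompat T S μ σ)
    (x : T.V) :
    S.leVE (Sum.inl (S.lcaSet (σ '' {l : T.V | T.isLeaf l ∧ T.le l x}))) (μ x) := by
  obtain ⟨l, hl, hlx⟩ := T.exists_leaf_le x
  rw [PPTree.inl_leVE_iff]
  refine S.lcaSet_le ?_ ?_
  · exact ⟨σ l, l, ⟨hl, hlx⟩, rfl⟩
  · rintro _ ⟨l, ⟨hl, hlx⟩, rfl⟩
    rw [← PPTree.inl_leVE_iff, ← hσ l hl]
    exact leVE_mu_of_le hrec.R3 hfree hlx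
end

section
/- For every relaxed scenario 𝒮 = (T,S,μ,τ_T,τ_S), the triple (T,S,μ) is a reconciliation, i.e., μ satisfies axioms (R0)–(R3). -/
/-!
Both time maps increase strictly towards the root, and (S2), (S3) say that `τ_T(x)` is a time
of `μ(x)`: the time of the vertex, or a time inside the span of the edge. Times of
`⪯_S`-ordered elements of `V(S) ∪ E(S)` are strictly ordered, so `μ(x) ≺_S μ(y)` for `y ≺_T x`
would force `τ_T(x) < τ_T(y)`; and two comparable vertices of `T` have different times, so they
cannot share a vertex image.
-/

theorem IsTimeMap.monotone {S : PPTree} {τ : S.V → ℝ} (hτ : IsTimeMap S τ) {u v : S.V}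
    (huv : S.le u v) : τ u ≤ τ v := by
  rcases eq_or_ne u v with rfl | hne
  · exact le_rfl
  · exact (hτ u v ⟨huv, hne⟩).le

namespace PPTree

variable {S : PPTree}

theorem le.parent_le_of_ne {x y : S.V} (hxy : S.le x y) (hne : x ≠ y) :
    S.le (S.parent x) y := by
  obtain ⟨n, hn⟩ := hxy
  cases n with
  | zero => exact absurd hn hne
  | succ m => exact ⟨m, by rwa [← Function.iterate_succ_apply]⟩

def IsTimeOf (τ : S.V → ℝ) (t : ℝ) : S.VE → Prop
  | Sum.inl v => t = τ v
  | Sum.inr e => τ e.1 < t ∧ t < τ (S.parent e.1)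

theorem IsTimeOf.lt_of_ltVE {τ : S.V → ℝ} (hτ : IsTimeMap S τ) {a b : S.VE} {s t : ℝ}
    (hab : S.ltVE a b) (hs : IsTimeOf τ s a) (ht : IsTimeOf τ t b) : s < t := by
  obtain ⟨hle, hne⟩ := hab
  match a, b, hs, ht, hle, hne with
  | Sum.inl u, Sum.inl v, hs, ht, hle, hne =>
    have : τ u < τ v := hτ u v ⟨hle, fun h => hne (h ▸ rfl)⟩
    simp only [IsTimeOf] at hs ht
    linarith
  | Sum.inl u, Sum.inr f, hs, ht, hle, _ =>
    have : τ u ≤ τ f.1 := hτ.monotone hle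
    simp only [IsTimeOf] at hs ht
    linarith
  | Sum.inr e, Sum.inl v, hs, ht, hle, _ =>
    have : τ (S.parent e.1) ≤ τ v := hτ.monotone hle
    simp only [IsTimeOf] at hs ht
    linarith
  | Sum.inr e, Sum.inr f, hs, ht, hle, hne =>
    have hef : e.1 ≠ f.1 := fun h => hne (congrArg Sum.inr (Subtype.ext h))
    have : τ (S.parent e.1) ≤ τ f.1 := hτ.monotone (le.parent_le_of_ne hle hef)
    simp only [IsTimeOf] at hs ht
    linarith

end PPTree

theorem IsRelaxedScenario.isTimeOf {T S : PPTree} {μ : T.V → S.VE} {τT : T.V → ℝ}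
    {τS : S.V → ℝ} (h : IsRelaxedScenario T S μ τT τS) (x : T.V) :
    S.IsTimeOf τS (τT x) (μ x) := by
  cases hx : μ x with
  | inl v => exact (h.S2 x v hx).symm
  | inr e => exact h.S3 x e hx

/-- For every relaxed scenario `(T,S,μ,τ_T,τ_S)` the triple
`(T,S,μ)` is a reconciliation, i.e. `μ` satisfies axioms (R0)–(R3). -/
theorem relaxedScenario_isRecon
    (T S : PPTree) (μ : T.V → S.VE) (τT : T.V → ℝ) (τS : S.V → ℝ)
    (h : IsRelaxedScenario T S μ τT τS) :
    IsRecon T S μ := by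
  refine ⟨h.S0, h.S1, ?_, ?_⟩
  · rintro x y hyx ⟨u, hu⟩ - hxy
    have htx := h.isTimeOf x
    have hty := h.isTimeOf y
    rw [hu] at htx
    rw [← hxy, hu] at hty
    have : τT y < τT x := h.timeT y x hyx
    simp only [PPTree.IsTimeOf] at htx hty
    linarith
  · intro x y hyx hμ
    exact (h.timeT y x hyx).not_gt
      (PPTree.IsTimeOf.lt_of_ltVE h.timeS hμ (h.isTimeOf x) (h.isTimeOf y))
end

section
/- If a vertex-colored digraph (G,σ) is the best match graph of a leaf-colored tree, i.e., (G,σ) = 𝔅(T,σ), then T displays every triple in the set R(G,σ) of informative triples of (G,σ) and displays no triple in the set F(G,σ) of forbidden triples of (G,σ). -/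
/-- A planted phylogenetic tree whose leaf set is (identified with) the finite
type `L` via the embedding `emb`. -/
structure LeafTree (L : Type) [Fintype L] [DecidableEq L] extends PPTree where
  emb : L → toPPTree.V
  emb_inj : Function.Injective emb
  emb_leaf : ∀ v : L, toPPTree.isLeaf (emb v)
  emb_surj : ∀ l, toPPTree.isLeaf l → ∃ v : L, emb v = l

/-- The tree `T` displays the rooted triple `ab|c`:
`lca(a,b) ≺ lca(a,c) = lca(b,c)`. -/
def displaysTriple (T : PPTree) (a b c : T.V) : Prop :=
  T.lt (T.lca a b) (T.lca a c) ∧ T.lca a c = T.lca b c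

section BMG

variable {V Y : Type} [Fintype V] [DecidableEq V]

/-- `y` is a best match of `x` in the leaf-colored tree `(T,σ)`:
`σ(x) ≠ σ(y)` and `lca(x,y) ⪯ lca(x,y')` for all leaves `y'` of the same color
as `y`. -/
def LeafTree.bestMatch (T : LeafTree V) (σ : V → Y) (x y : V) : Prop :=
  σ x ≠ σ y ∧ ∀ y' : V, σ y' = σ y →
    T.toPPTree.le (T.toPPTree.lca (T.emb x) (T.emb y))
      (T.toPPTree.lca (T.emb x) (T.emb y'))

/-- `(G,σ)` is the best match graph `𝔅(T,σ)` of the leaf-colored tree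
`(T,σ)`. -/
def Explains (T : LeafTree V) (σ : V → Y) (G : V → V → Prop) : Prop :=
  ∀ x y : V, G x y ↔ T.bestMatch σ x y

/-- The triple `ab|b'` is informative for `(G,σ)`. -/
def Informative (G : V → V → Prop) (σ : V → Y) (a b b' : V) : Prop :=
  a ≠ b ∧ a ≠ b' ∧ b ≠ b' ∧ σ a ≠ σ b ∧ σ b = σ b' ∧ G a b ∧ ¬ G a b'

/-- The triple `ab|b'` is forbidden for `(G,σ)`. -/
def Forbidden (G : V → V → Prop) (σ : V → Y) (a b b' : V) : Prop :=
  a ≠ b ∧ a ≠ b' ∧ b ≠ b' ∧ σ a ≠ σ b ∧ σ b = σ b' ∧ G a b ∧ G a b'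

end BMG

/-!
Since `lca(a,b) ⪯ lca(a,b')` whenever `b` is a best match of `a` and `σ b = σ b'`, the triple
`ab|b'` is displayed exactly when `b'` is not a best match of `a` as well: equality of the two
last common ancestors would make `b'` a best match, and two best matches of the same color have
the same last common ancestor with `a`.  The remaining step is the tree fact that
`lca(a,b) ≺ lca(a,c)` already forces `lca(a,c) = lca(b,c)`.
-/

namespace PPTree

variable {T : PPTree}

theorem eq_root_of_iterate_eq_self {x : T.V} {p : ℕ} (hp : 0 < p)
    (hper : T.parent^[p] x = x) : x = T.root := by
  obtain ⟨k, hk⟩ := T.reach x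
  have hge : k ≤ p * k := Nat.le_mul_of_pos_left k hp
  calc x = T.parent^[p * k] x := by
        rw [Function.iterate_mul]; exact (Function.iterate_fixed hper k).symm
    _ = T.parent^[(p * k - k) + k] x := by rw [Nat.sub_add_cancel hge]
    _ = T.root := by rw [Function.iterate_add_apply, hk, Function.iterate_fixed T.parent_root]

theorem le.trans {x y z : T.V} (h₁ : T.le x y) (h₂ : T.le y z) : T.le x z := by
  obtain ⟨m, rfl⟩ := h₁
  obtain ⟨n, rfl⟩ := h₂
  exact ⟨n + m, Function.iterate_add_apply ..⟩

theorem le.antisymm {x y : T.V} (h₁ : T.le x y) (h₂ : T.le y x) : x = y := by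
  obtain ⟨m, rfl⟩ := h₁
  obtain ⟨n, hn⟩ := h₂
  rcases Nat.eq_zero_or_pos (n + m) with hz | hp
  · obtain rfl : m = 0 := by omega
    rfl
  · have hx := eq_root_of_iterate_eq_self hp (by rwa [Function.iterate_add_apply])
    rw [hx, Function.iterate_fixed T.parent_root]

theorem le.total {x u w : T.V} (h₁ : T.le x u) (h₂ : T.le x w) :
    T.le u w ∨ T.le w u := by
  obtain ⟨m, rfl⟩ := h₁
  obtain ⟨n, rfl⟩ := h₂
  rcases le_total m n with hle | hle
  · exact Or.inl ⟨n - m, by rw [← Function.iterate_add_apply, Nat.sub_add_cancel hle]⟩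
  · exact Or.inr ⟨m - n, by rw [← Function.iterate_add_apply, Nat.sub_add_cancel hle]⟩

theorem exists_isLCA (x y : T.V) :
    ∃ v, T.le x v ∧ T.le y v ∧ ∀ w, T.le x w → T.le y w → T.le v w := by
  classical
  have hP : ∃ n, T.le y (T.parent^[n] x) := by
    obtain ⟨k, hk⟩ := T.reach x
    exact ⟨k, hk ▸ T.reach y⟩
  refine ⟨T.parent^[Nat.find hP] x, ⟨Nat.find hP, rfl⟩, Nat.find_spec hP, ?_⟩
  rintro w ⟨m, rfl⟩ hyw
  exact ⟨m - Nat.find hP, by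
    rw [← Function.iterate_add_apply, Nat.sub_add_cancel (Nat.find_min' hP hyw)]⟩

theorem lca_spec (x y : T.V) :
    T.le x (T.lca x y) ∧ T.le y (T.lca x y) ∧
      ∀ w, T.le x w → T.le y w → T.le (T.lca x y) w :=
  Classical.epsilon_spec (exists_isLCA x y)

theorem le_lca_left (x y : T.V) : T.le x (T.lca x y) := (lca_spec x y).1

theorem le_lca_right (x y : T.V) : T.le y (T.lca x y) := (lca_spec x y).2.1

theorem lca_le {x y w : T.V} (hx : T.le x w) (hy : T.le y w) : T.le (T.lca x y) w :=
  (lca_spec x y).2.2 w hx hy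

theorem displaysTriple_of_lt_lca {a b c : T.V} (hlt : T.lt (T.lca a b) (T.lca a c)) :
    displaysTriple T a b c := by
  obtain ⟨hle, hne⟩ := hlt
  refine ⟨⟨hle, hne⟩, le.antisymm ?_ (lca_le ((le_lca_right a b).trans hle) (le_lca_right a c))⟩
  rcases (le_lca_right a b).total (le_lca_left b c) with hab | hbc
  · exact lca_le ((le_lca_left a b).trans hab) (le_lca_right b c)
  · have hca : T.le (T.lca a c) (T.lca a b) :=
      lca_le (le_lca_left a b) ((le_lca_right b c).trans hbc)
    exact absurd (hle.antisymm hca) hne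

end PPTree

namespace LeafTree

variable {V Y : Type} [Fintype V] [DecidableEq V] (T : LeafTree V) (σ : V → Y)

theorem bestMatch_of_lca_eq {x y y' : V} (hy : T.bestMatch σ x y) (hσ : σ y' = σ y)
    (heq : T.lca (T.emb x) (T.emb y') = T.lca (T.emb x) (T.emb y)) :
    T.bestMatch σ x y' :=
  ⟨hσ ▸ hy.1, fun z hz => heq ▸ hy.2 z (hz.trans hσ)⟩

theorem lca_eq_of_bestMatch {x y y' : V} (hy : T.bestMatch σ x y) (hy' : T.bestMatch σ x y')
    (hσ : σ y = σ y') : T.lca (T.emb x) (T.emb y) = T.lca (T.emb x) (T.emb y') :=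
  (hy.2 y' hσ.symm).antisymm (hy'.2 y hσ)

end LeafTree

/-- If `(G,σ) = 𝔅(T,σ)` is the best match graph of a
leaf-colored tree `(T,σ)`, then `T` displays every informative triple of
`(G,σ)` and no forbidden triple of `(G,σ)`. -/
theorem bmg_displays_informative_not_forbidden
    {V Y : Type} [Fintype V] [DecidableEq V]
    (T : LeafTree V) (σ : V → Y) (G : V → V → Prop)
    (h : Explains T σ G) :
    (∀ a b b' : V, Informative G σ a b b' →
        displaysTriple T.toPPTree (T.emb a) (T.emb b) (T.emb b')) ∧
    (∀ a b b' : V, Forbidden G σ a b b' →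
        ¬ displaysTriple T.toPPTree (T.emb a) (T.emb b) (T.emb b')) := by
  constructor
  · rintro a b b' ⟨-, -, -, -, hσ, hab, hab'⟩
    have hb := (h a b).1 hab
    have hne : T.lca (T.emb a) (T.emb b) ≠ T.lca (T.emb a) (T.emb b') := fun heq =>
      hab' ((h a b').2 (T.bestMatch_of_lca_eq σ hb hσ.symm heq.symm))
    exact PPTree.displaysTriple_of_lt_lca ⟨hb.2 b' hσ.symm, hne⟩
  · rintro a b b' ⟨-, -, -, -, hσ, hab, hab'⟩ hd
    exact hd.1.2 (T.lca_eq_of_bestMatch σ ((h a b).1 hab) ((h a b').1 hab') hσ)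
end
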